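/- arXiv:2410.03475 — 2 statements merged into one kernel-verified Lean document; each statement's English description precedes it below -/
import Mathlib

section
/- Suppose the twisted geometric data assumption holds: A is a unital C*-algebra with a strongly continuous circle action σ, 𝒜 ⊆ A is a norm-dense unital *-subalgebra generated as a *-algebra by 𝒜 ∩ A_1, H is a complex Hilbert space, φ : A → B(H) is a unital *-homomorphism, δ : 𝒜 → B(H) is a ℂ-linear map, μ > 0 is a constant, the twisted Leibniz rule δ(ab) = δ(a)φ(b) + μ^n φ(a)δ(b) holds whenever a ∈ 𝒜 ∩ A_n for some n ∈ ℤ and b ∈ 𝒜, and there exist finitely many elements ζ_1^R,…,ζ_k^R ∈ 𝒜 ∩ A_1 and ζ_1^L,…,ζ_m^L ∈ 𝒜 ∩ A_1 with ∑_{j=1}^k ζ_j^R (ζ_j^R)* = 1 = ∑_{j=1}^m (ζ_j^L)* ζ_j^L and ∑_{j=1}^k φ(ζ_j^R) δ((ζ_j^R)*) = 0 = ∑_{j=1}^m φ(ζ_j^L)* δ(ζ_j^L). Then for every n ∈ ℤ there exist finitely many elements ζ_{(n,1)},…,ζ_{(n,m_n)} ∈ 𝒜 ∩ A_n such that ∑_{j=1}^{m_n}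 ζ_{(n,j)} ζ_{(n,j)}* = 1 and ∑_{j=1}^{m_n} φ(ζ_{(n,j)}) δ(ζ_{(n,j)}*) = 0. -/
noncomputable section

open scoped Real

/-- A strongly continuous action of the circle group on a unital C*-algebra by
*-automorphisms. -/
structure CircleAction (A : Type*) [NormedRing A] [StarRing A] [NormedAlgebra ℂ A] where
  σ : Circle → A → A
  map_one_apply : ∀ a : A, σ 1 a = a
  map_mul_apply : ∀ g h : Circle, ∀ a : A, σ (g * h) a = σ g (σ h a)
  map_add : ∀ g : Circle, ∀ a b : A, σ g (a + b) = σ g a + σ g b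
  map_smul : ∀ g : Circle, ∀ (c : ℂ) (a : A), σ g (c • a) = c • σ g a
  map_mul : ∀ g : Circle, ∀ a b : A, σ g (a * b) = σ g a * σ g b
  map_star : ∀ g : Circle, ∀ a : A, σ g (star a) = star (σ g a)
  map_unit : ∀ g : Circle, σ g 1 = 1
  strong_continuity : ∀ a : A, Continuous fun g : Circle => σ g a

variable {A : Type*} [NormedRing A] [StarRing A] [CStarRing A] [NormedAlgebra ℂ A]
  [StarModule ℂ A] [CompleteSpace A]

/-- The spectral subspace `A_n`. -/
def specSub (S : CircleAction A) (n : ℤ) : Set A :=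
  {a : A | ∀ lam : Circle, S.σ lam a = ((lam : ℂ) ^ n) • a}

/-!
Statement 5: Under the twisted geometric data assumption, every spectral degree `n ∈ ℤ`
admits a finite family `ζ_{(n,1)}, …, ζ_{(n,m_n)} ∈ 𝒜 ∩ A_n` with
`∑_j ζ_{(n,j)} ζ_{(n,j)}* = 1` and `∑_j φ(ζ_{(n,j)}) δ(ζ_{(n,j)}*) = 0`.
-/


section Aux
variable {A : Type*} [NormedRing A] [StarRing A] [CStarRing A] [NormedAlgebra ℂ A]
  [StarModule ℂ A] [CompleteSpace A]

omit [CStarRing A] [StarModule ℂ A] [CompleteSpace A] in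
lemma specSub_one' (S : CircleAction A) : (1:A) ∈ specSub S 0 := by
  intro lam; simp [S.map_unit]

omit [CStarRing A] [StarModule ℂ A] [CompleteSpace A] in
lemma specSub_mul' {S : CircleAction A} {m n : ℤ} {a b : A}
    (ha : a ∈ specSub S m) (hb : b ∈ specSub S n) : a * b ∈ specSub S (m + n) := by
  intro lam
  rw [S.map_mul, ha lam, hb lam, smul_mul_smul_comm, zpow_add₀ lam.coe_ne_zero]

omit [CStarRing A] [CompleteSpace A] in
lemma specSub_star' {S : CircleAction A} {n : ℤ} {a : A}
    (ha : a ∈ specSub S n) : star a ∈ specSub S (-n) := by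
  intro lam
  rw [S.map_star, ha lam, star_smul]
  congr 1
  rw [star_zpow₀, RCLike.star_def, ← Circle.coe_inv_eq_conj, Circle.coe_inv, inv_zpow,
    ← zpow_neg]

end Aux

theorem frames_with_vanishing_condition
    {H : Type*} [NormedAddCommGroup H] [InnerProductSpace ℂ H] [CompleteSpace H]
    (S : CircleAction A) (𝒜 : StarSubalgebra ℂ A) (hdense : Dense (𝒜 : Set A))
    (hgen : 𝒜 = StarAlgebra.adjoin ℂ ((𝒜 : Set A) ∩ specSub S 1))
    (φ : A →⋆ₐ[ℂ] (H →L[ℂ] H)) (δ : A → (H →L[ℂ] H))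
    (hδ_add : ∀ a ∈ 𝒜, ∀ b ∈ 𝒜, δ (a + b) = δ a + δ b)
    (hδ_smul : ∀ (c : ℂ), ∀ a ∈ 𝒜, δ (c • a) = c • δ a)
    (μ : ℝ) (hμ : 0 < μ)
    (hLeibniz : ∀ n : ℤ, ∀ a ∈ (𝒜 : Set A) ∩ specSub S n, ∀ b ∈ 𝒜,
      δ (a * b) = δ a * φ b + ((μ : ℂ) ^ n) • (φ a * δ b))
    (hframeR : ∃ (k : ℕ) (ζR : Fin k → A),
      (∀ j, ζR j ∈ 𝒜 ∧ ζR j ∈ specSub S 1) ∧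
      ∑ j, ζR j * star (ζR j) = 1 ∧
      ∑ j, φ (ζR j) * δ (star (ζR j)) = 0)
    (hframeL : ∃ (m : ℕ) (ζL : Fin m → A),
      (∀ j, ζL j ∈ 𝒜 ∧ ζL j ∈ specSub S 1) ∧
      ∑ j, star (ζL j) * ζL j = 1 ∧
      ∑ j, star (φ (ζL j)) * δ (ζL j) = 0) :
    ∀ n : ℤ, ∃ (mn : ℕ) (ζ : Fin mn → A),
      (∀ j, ζ j ∈ 𝒜 ∧ ζ j ∈ specSub S n) ∧
      ∑ j, ζ j * star (ζ j) = 1 ∧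
      ∑ j, φ (ζ j) * δ (star (ζ j)) = 0 := by
  obtain ⟨k, ζR, hR, hRsum, hRvan⟩ := hframeR
  obtain ⟨m, ζL, hL, hLsum, hLvan⟩ := hframeL
  -- δ 1 = 0
  have hδ1 : δ (1:A) = 0 := by
    have h := hLeibniz 0 1 ⟨𝒜.one_mem, specSub_one' S⟩ 1 𝒜.one_mem
    simp only [mul_one, map_one, zpow_zero, one_smul, one_mul] at h
    have h2 : δ (1:A) + 0 = δ 1 + δ 1 := by rw [add_zero]; exact h
    exact (add_left_cancel h2).symm
  intro n
  induction n using Int.induction_on with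
  | zero =>
    refine ⟨1, fun _ => 1, fun j => ⟨𝒜.one_mem, specSub_one' S⟩, by simp, by simp [hδ1]⟩
  | succ i ih =>
    obtain ⟨mn, ζ, hζ, hsum, hvan⟩ := ih
    refine ⟨k * mn, fun j => ζR (finProdFinEquiv.symm j).1 * ζ (finProdFinEquiv.symm j).2,
      ?_, ?_, ?_⟩
    · intro j
      refine ⟨mul_mem (hR _).1 (hζ _).1, ?_⟩
      have := specSub_mul' (hR (finProdFinEquiv.symm j).1).2 (hζ (finProdFinEquiv.symm j).2).2
      have he : (1 : ℤ) + (i : ℤ) = (i : ℤ) + 1 := by ring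
      rwa [he] at this
    · rw [← finProdFinEquiv.sum_comp] <;> try skip
      rw [Fintype.sum_prod_type]
      simp only [Equiv.symm_apply_apply]
      have hinner : ∀ p : Fin k, ∑ j : Fin mn,
          (ζR p * ζ j) * star (ζR p * ζ j) = ζR p * star (ζR p) := by
        intro p
        have : ∀ j : Fin mn, (ζR p * ζ j) * star (ζR p * ζ j)
            = ζR p * ((ζ j * star (ζ j)) * star (ζR p)) := by
          intro j; rw [star_mul]; simp only [mul_assoc]
        rw [Finset.sum_congr rfl fun j _ => this j, ← Finset.mul_sum, ← Finset.sum_mul, hsum,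
          one_mul]
      rw [Finset.sum_congr rfl fun p _ => hinner p, hRsum]
    · rw [← finProdFinEquiv.sum_comp]
      rw [Fintype.sum_prod_type]
      simp only [Equiv.symm_apply_apply]
      have hinner : ∀ p : Fin k, ∑ j : Fin mn,
          φ (ζR p * ζ j) * δ (star (ζR p * ζ j))
          = ((μ:ℂ) ^ (-(i:ℤ))) • (φ (ζR p) * δ (star (ζR p))) := by
        intro p
        have hterm : ∀ j : Fin mn, φ (ζR p * ζ j) * δ (star (ζR p * ζ j))
            = φ (ζR p) * ((φ (ζ j) * δ (star (ζ j))) * φ (star (ζR p)))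
              + ((μ:ℂ) ^ (-(i:ℤ))) • (φ (ζR p) * ((φ (ζ j) * φ (star (ζ j))) * δ (star (ζR p)))) := by
          intro j
          have hLb := hLeibniz (-(i:ℤ)) (star (ζ j))
            ⟨star_mem (hζ j).1, specSub_star' (hζ j).2⟩ (star (ζR p)) (star_mem (hR p).1)
          rw [star_mul, map_mul, hLb]
          rw [mul_add, mul_smul_comm]
          simp only [map_mul, mul_assoc]
        rw [Finset.sum_congr rfl fun j _ => hterm j, Finset.sum_add_distrib,
          ← Finset.mul_sum, ← Finset.smul_sum, ← Finset.mul_sum]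
        have e1 : ∑ j : Fin mn, (φ (ζ j) * δ (star (ζ j))) * φ (star (ζR p)) = 0 := by
          rw [← Finset.sum_mul, hvan, zero_mul]
        have e2 : ∑ j : Fin mn, (φ (ζ j) * φ (star (ζ j))) * δ (star (ζR p))
            = δ (star (ζR p)) := by
          rw [← Finset.sum_mul]
          have : ∑ j : Fin mn, φ (ζ j) * φ (star (ζ j)) = 1 := by
            simp only [← map_mul]
            rw [← map_sum, hsum, map_one]
          rw [this, one_mul]
        rw [e1, e2, mul_zero, zero_add]
      rw [Finset.sum_congr rfl fun p _ => hinner p, ← Finset.smul_sum, hRvan, smul_zero]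
  | pred i ih =>
    obtain ⟨mn, ζ, hζ, hsum, hvan⟩ := ih
    refine ⟨mn * m, fun j => ζ (finProdFinEquiv.symm j).1 * star (ζL (finProdFinEquiv.symm j).2),
      ?_, ?_, ?_⟩
    · intro j
      refine ⟨mul_mem (hζ _).1 (star_mem (hL _).1), ?_⟩
      have := specSub_mul' (hζ (finProdFinEquiv.symm j).1).2
        (specSub_star' (hL (finProdFinEquiv.symm j).2).2)
      have he : (-(i:ℤ)) + (-1 : ℤ) = -(i:ℤ) - 1 := by ring
      rwa [he] at this
    · rw [← finProdFinEquiv.sum_comp]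
      rw [Fintype.sum_prod_type]
      simp only [Equiv.symm_apply_apply]
      have hinner : ∀ j : Fin mn, ∑ q : Fin m,
          (ζ j * star (ζL q)) * star (ζ j * star (ζL q)) = ζ j * star (ζ j) := by
        intro j
        have : ∀ q : Fin m, (ζ j * star (ζL q)) * star (ζ j * star (ζL q))
            = ζ j * ((star (ζL q) * ζL q) * star (ζ j)) := by
          intro q; rw [star_mul, star_star]; simp only [mul_assoc]
        rw [Finset.sum_congr rfl fun q _ => this q, ← Finset.mul_sum, ← Finset.sum_mul, hLsum,
          one_mul]
      rw [Finset.sum_congr rfl fun j _ => hinner j, hsum]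
    · rw [← finProdFinEquiv.sum_comp]
      rw [Fintype.sum_prod_type]
      simp only [Equiv.symm_apply_apply]
      have hinner : ∀ j : Fin mn, ∑ q : Fin m,
          φ (ζ j * star (ζL q)) * δ (star (ζ j * star (ζL q)))
          = ((μ:ℂ) ^ (1:ℤ)) • (φ (ζ j) * δ (star (ζ j))) := by
        intro j
        have hterm : ∀ q : Fin m, φ (ζ j * star (ζL q)) * δ (star (ζ j * star (ζL q)))
            = φ (ζ j) * ((φ (star (ζL q)) * δ (ζL q)) * φ (star (ζ j)))
              + ((μ:ℂ) ^ (1:ℤ)) • (φ (ζ j) * ((φ (star (ζL q)) * φ (ζL q)) * δ (star (ζ j)))) := by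
          intro q
          have hLb := hLeibniz 1 (ζL q) ⟨(hL q).1, (hL q).2⟩ (star (ζ j)) (star_mem (hζ j).1)
          rw [star_mul, star_star, map_mul, hLb]
          rw [mul_add, mul_smul_comm]
          simp only [map_mul, mul_assoc]
        rw [Finset.sum_congr rfl fun q _ => hterm q, Finset.sum_add_distrib,
          ← Finset.mul_sum, ← Finset.smul_sum, ← Finset.mul_sum]
        have e1 : ∑ q : Fin m, (φ (star (ζL q)) * δ (ζL q)) * φ (star (ζ j)) = 0 := by
          rw [← Finset.sum_mul]
          have : ∑ q : Fin m, φ (star (ζL q)) * δ (ζL q) = 0 := by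
            simp only [map_star]; exact hLvan
          rw [this, zero_mul]
        have e2 : ∑ q : Fin m, (φ (star (ζL q)) * φ (ζL q)) * δ (star (ζ j))
            = δ (star (ζ j)) := by
          rw [← Finset.sum_mul]
          have : ∑ q : Fin m, φ (star (ζL q)) * φ (ζL q) = 1 := by
            simp only [← map_mul]
            rw [← map_sum, hLsum, map_one]
          rw [this, one_mul]
        rw [e1, e2, mul_zero, zero_add]
      rw [Finset.sum_congr rfl fun j _ => hinner j, ← Finset.smul_sum, hvan, smul_zero]


end
end

section
/- Suppose the twisted geometric data assumption holds: A is a unital C*-algebra with a strongly continuous circle action σ, 𝒜 ⊆ A is a norm-dense unital *-subalgebra generated as a *-algebra by 𝒜 ∩ A_1, H is a complex Hilbert space, φ : A → B(H) is a unital *-homomorphism, δ : 𝒜 → B(H) is a ℂ-linear map, μ > 0 is a constant, the twisted Leibniz rule δ(ab) = δ(a)φ(b) + μ^n φ(a)δ(b) holds whenever a ∈ 𝒜 ∩ A_n for some n ∈ ℤ and b ∈ 𝒜, and there exist finitely many elements ζ_1^R,…,ζ_k^R ∈ 𝒜 ∩ A_1 and ζ_1^L,…,ζ_m^L ∈ 𝒜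 ∩ A_1 with ∑_{j=1}^k ζ_j^R (ζ_j^R)* = 1 = ∑_{j=1}^m (ζ_j^L)* ζ_j^L and ∑_{j=1}^k φ(ζ_j^R) δ((ζ_j^R)*) = 0 = ∑_{j=1}^m φ(ζ_j^L)* δ(ζ_j^L). Suppose further that H_0 ⊆ H is a closed subspace, ρ : A_0 → B(H_0) is an injective unital *-homomorphism and δ_0 : 𝒜 ∩ A_0 → B(H_0) is a map such that φ(a)ξ = ρ(a)ξ and δ(a)ξ = δ_0(a)ξ for all a ∈ 𝒜 ∩ A_0 and ξ ∈ H_0. For k ∈ ℤ let H_k ⊆ H denote the closed linear span of {φ(x)ξ : x ∈ A_k, ξ ∈ H_0}. Then for all n, m ∈ ℤ and every a ∈ 𝒜 ∩ A_n, the bounded operator δ(a) maps H_m into H_{n+m}; in particular δ(a)(φ(x)ξ) ∈ H_{n+m} for every x ∈ 𝒜 ∩ A_m and ξ ∈ H_0. -/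
set_option linter.unusedSectionVars false
set_option linter.unusedVariables false


noncomputable section

open scoped Real

variable {A : Type*} [NormedRing A] [StarRing A] [CStarRing A] [NormedAlgebra ℂ A]
  [StarModule ℂ A] [CompleteSpace A]

namespace CircleAction

variable (S : CircleAction A)

lemma sigma_zero (g : Circle) : S.σ g 0 = 0 := by
  have h := S.map_smul g 0 0
  simpa using h

lemma sigma_sub (g : Circle) (a b : A) : S.σ g (a - b) = S.σ g a - S.σ g b := by
  have h : S.σ g (-b) = -S.σ g b := by
    have := S.map_smul g (-1) b
    simpa using this
  rw [sub_eq_add_neg, S.map_add, h, sub_eq_add_neg]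

lemma sigma_sum (g : Circle) {ι : Type*} (s : Finset ι) (v : ι → A) :
    S.σ g (∑ i ∈ s, v i) = ∑ i ∈ s, S.σ g (v i) := by
  classical
  induction s using Finset.induction with
  | empty => simpa using S.sigma_zero g
  | insert _ _ h ih => rw [Finset.sum_insert h, Finset.sum_insert h, S.map_add, ih]

/-- `σ g` as a star-algebra automorphism. -/
def toStarAlgEquiv (g : Circle) : A ≃⋆ₐ[ℂ] A where
  toFun := S.σ g
  invFun := S.σ g⁻¹
  left_inv a := by rw [← S.map_mul_apply, inv_mul_cancel, S.map_one_apply]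
  right_inv a := by rw [← S.map_mul_apply, mul_inv_cancel, S.map_one_apply]
  map_add' := S.map_add g
  map_mul' := S.map_mul g
  map_smul' := S.map_smul g
  map_star' := S.map_star g

lemma norm_sigma (g : Circle) (a : A) : ‖S.σ g a‖ = ‖a‖ := by
  letI : CStarAlgebra A := {}
  exact StarAlgEquiv.norm_map (S.toStarAlgEquiv g) a

lemma specSub_zero_mem (n : ℤ) : (0 : A) ∈ specSub S n := fun lam => by
  rw [S.sigma_zero, smul_zero]

lemma specSub_one_mem : (1 : A) ∈ specSub S 0 := fun lam => by
  rw [S.map_unit, zpow_zero, one_smul]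

lemma specSub_add {n : ℤ} {a b : A} (ha : a ∈ specSub S n) (hb : b ∈ specSub S n) :
    a + b ∈ specSub S n := fun lam => by
  rw [S.map_add, ha lam, hb lam, smul_add]

lemma specSub_smul {n : ℤ} (c : ℂ) {a : A} (ha : a ∈ specSub S n) :
    c • a ∈ specSub S n := fun lam => by
  rw [S.map_smul, ha lam, smul_comm]

/-- `specSub` as a submodule. -/
def specSubmodule (n : ℤ) : Submodule ℂ A where
  carrier := specSub S n
  add_mem' := S.specSub_add
  zero_mem' := S.specSub_zero_mem n
  smul_mem' c a ha := S.specSub_smul c ha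

lemma mem_specSubmodule {n : ℤ} {x : A} : x ∈ S.specSubmodule n ↔ x ∈ specSub S n :=
  Iff.rfl

lemma specSub_mul {n m : ℤ} {a b : A} (ha : a ∈ specSub S n) (hb : b ∈ specSub S m) :
    a * b ∈ specSub S (n + m) := fun lam => by
  rw [S.map_mul, ha lam, hb lam, smul_mul_assoc, mul_smul_comm, smul_smul,
    ← zpow_add₀ (Circle.coe_ne_zero lam)]

lemma specSub_star {n : ℤ} {a : A} (ha : a ∈ specSub S n) :
    star a ∈ specSub S (-n) := fun lam => by
  rw [S.map_star, ha lam, star_smul]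
  congr 1
  have h : (starRingEnd ℂ) (lam : ℂ) = ((lam : ℂ))⁻¹ := by
    rw [← Circle.coe_inv_eq_conj, Circle.coe_inv]
  rw [star_zpow₀, Complex.star_def, h, inv_zpow, ← zpow_neg]

end CircleAction


/-!
Statement 7: Under the twisted geometric data assumption together with a closed subspace
`H₀ ⊆ H`, an injective unital *-homomorphism `ρ : A₀ → B(H₀)` and a map
`δ₀ : 𝒜 ∩ A₀ → B(H₀)` compatible with `φ` and `δ` on `H₀`, the operator `δ(a)`
maps `H_m` into `H_{n+m}` for every `a ∈ 𝒜 ∩ A_n`, where `H_k` denotes the closed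
linear span of `{φ(x)ξ : x ∈ A_k, ξ ∈ H₀}`; in particular
`δ(a)(φ(x)ξ) ∈ H_{n+m}` for `x ∈ 𝒜 ∩ A_m`, `ξ ∈ H₀`.
-/

set_option maxHeartbeats 2000000 in
theorem twisted_derivation_maps_spectral_subspaces
    {H : Type*} [NormedAddCommGroup H] [InnerProductSpace ℂ H] [CompleteSpace H]
    (S : CircleAction A) (𝒜 : StarSubalgebra ℂ A) (hdense : Dense (𝒜 : Set A))
    (hgen : 𝒜 = StarAlgebra.adjoin ℂ ((𝒜 : Set A) ∩ specSub S 1))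
    (φ : A →⋆ₐ[ℂ] (H →L[ℂ] H)) (δ : A → (H →L[ℂ] H))
    (hδ_add : ∀ a ∈ 𝒜, ∀ b ∈ 𝒜, δ (a + b) = δ a + δ b)
    (hδ_smul : ∀ (c : ℂ), ∀ a ∈ 𝒜, δ (c • a) = c • δ a)
    (μ : ℝ) (hμ : 0 < μ)
    (hLeibniz : ∀ n : ℤ, ∀ a ∈ (𝒜 : Set A) ∩ specSub S n, ∀ b ∈ 𝒜,
      δ (a * b) = δ a * φ b + ((μ : ℂ) ^ n) • (φ a * δ b))
    (hframeR : ∃ (k : ℕ) (ζR : Fin k → A),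
      (∀ j, ζR j ∈ 𝒜 ∧ ζR j ∈ specSub S 1) ∧
      ∑ j, ζR j * star (ζR j) = 1 ∧
      ∑ j, φ (ζR j) * δ (star (ζR j)) = 0)
    (hframeL : ∃ (m : ℕ) (ζL : Fin m → A),
      (∀ j, ζL j ∈ 𝒜 ∧ ζL j ∈ specSub S 1) ∧
      ∑ j, star (ζL j) * ζL j = 1 ∧
      ∑ j, star (φ (ζL j)) * δ (ζL j) = 0)
    -- the closed subspace `H₀ ⊆ H`
    (H₀ : Submodule ℂ H) (hH₀closed : IsClosed (H₀ : Set H)) [CompleteSpace H₀]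
    -- `ρ : A₀ → B(H₀)` an injective unital *-homomorphism
    (ρ : A → (H₀ →L[ℂ] H₀))
    (hρ_inj : ∀ x ∈ specSub S 0, ∀ y ∈ specSub S 0, ρ x = ρ y → x = y)
    (hρ_one : ρ 1 = 1)
    (hρ_add : ∀ x ∈ specSub S 0, ∀ y ∈ specSub S 0, ρ (x + y) = ρ x + ρ y)
    (hρ_smul : ∀ (c : ℂ), ∀ x ∈ specSub S 0, ρ (c • x) = c • ρ x)
    (hρ_mul : ∀ x ∈ specSub S 0, ∀ y ∈ specSub S 0, ρ (x * y) = ρ x * ρ y)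
    (hρ_star : ∀ x ∈ specSub S 0, ρ (star x) = star (ρ x))
    -- `δ₀ : 𝒜 ∩ A₀ → B(H₀)` together with the compatibilities on `H₀`
    (δ₀ : A → (H₀ →L[ℂ] H₀))
    (hφρ : ∀ a ∈ (𝒜 : Set A) ∩ specSub S 0, ∀ ξ : H₀, φ a (ξ : H) = (ρ a ξ : H))
    (hδδ₀ : ∀ a ∈ (𝒜 : Set A) ∩ specSub S 0, ∀ ξ : H₀, δ a (ξ : H) = (δ₀ a ξ : H)) :
    ∀ n m : ℤ, ∀ a ∈ (𝒜 : Set A) ∩ specSub S n,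
      (∀ v ∈ closure (↑(Submodule.span ℂ
          {w : H | ∃ x ∈ specSub S m, ∃ ξ ∈ H₀, w = φ x ξ}) : Set H),
        δ a v ∈ closure (↑(Submodule.span ℂ
          {w : H | ∃ x ∈ specSub S (n + m), ∃ ξ ∈ H₀, w = φ x ξ}) : Set H)) ∧
      ∀ x ∈ (𝒜 : Set A) ∩ specSub S m, ∀ ξ ∈ H₀,
        δ a (φ x ξ) ∈ closure (↑(Submodule.span ℂ
          {w : H | ∃ x ∈ specSub S (n + m), ∃ ξ ∈ H₀, w = φ x ξ}) : Set H) := by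
  classical
  letI : CStarAlgebra A := {}
  obtain ⟨kR, ζR, hζR, hR1, hR2⟩ := hframeR
  obtain ⟨kL, ζL, hζL, hL1, hL2⟩ := hframeL
  have hζRa : ∀ j, ζR j ∈ 𝒜 := fun j => (hζR j).1
  have hζRs : ∀ j, ζR j ∈ specSub S 1 := fun j => (hζR j).2
  have hζLa : ∀ j, ζL j ∈ 𝒜 := fun j => (hζL j).1
  have hζLs : ∀ j, ζL j ∈ specSub S 1 := fun j => (hζL j).2
  have hμc : (μ : ℂ) ≠ 0 := by
    simpa using Complex.ofReal_ne_zero.mpr hμ.ne'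
  set HM : ℤ → Submodule ℂ H := fun k =>
    (Submodule.span ℂ {w : H | ∃ x ∈ specSub S k, ∃ ξ ∈ H₀, w = φ x ξ}).topologicalClosure
    with hHMdef
  have hHMclosed : ∀ k, IsClosed (HM k : Set H) := fun k =>
    Submodule.isClosed_topologicalClosure _
  have hGsub : ∀ (k : ℤ) (x : A), x ∈ specSub S k → ∀ ξ : H, ξ ∈ H₀ → φ x ξ ∈ HM k := by
    intro k x hx ξ hξ
    exact Submodule.le_topologicalClosure _ (Submodule.subset_span ⟨x, hx, ξ, hξ, rfl⟩)
  have hH₀sub : ∀ ξ : H₀, (ξ : H) ∈ HM 0 := by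
    intro ξ
    have h := hGsub 0 1 S.specSub_one_mem ξ ξ.2
    simpa using h
  -- φ of a homogeneous element maps HM e into HM (j + e)
  have hφmap : ∀ (j e : ℤ) (y : A), y ∈ specSub S j → ∀ v : H, v ∈ HM e →
      φ y v ∈ HM (j + e) := by
    intro j e y hy v hv
    have hle : Submodule.span ℂ {w : H | ∃ x ∈ specSub S e, ∃ ξ ∈ H₀, w = φ x ξ}
        ≤ (HM (j + e)).comap ((φ y : H →L[ℂ] H) : H →ₗ[ℂ] H) := by
      rw [Submodule.span_le]
      rintro w ⟨x, hx, ξ, hξ, rfl⟩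
      simp only [SetLike.mem_coe, Submodule.mem_comap, ContinuousLinearMap.coe_coe]
      have h1 : φ y (φ x ξ) = φ (y * x) ξ := by
        rw [map_mul, ContinuousLinearMap.mul_apply]
      rw [h1]
      exact hGsub _ _ (S.specSub_mul hy hx) _ hξ
    have hv' : v ∈ closure
        (↑(Submodule.span ℂ {w : H | ∃ x ∈ specSub S e, ∃ ξ ∈ H₀, w = φ x ξ}) : Set H) := hv
    have hmaps : Set.MapsTo (φ y)
        (↑(Submodule.span ℂ {w : H | ∃ x ∈ specSub S e, ∃ ξ ∈ H₀, w = φ x ξ}) : Set H)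
        (HM (j + e) : Set H) := fun w hw => Submodule.mem_comap.mp (hle hw)
    have := map_mem_closure (φ y).continuous hv' hmaps
    rwa [(hHMclosed (j + e)).closure_eq] at this
  -- pointwise Leibniz rearrangement
  have hLB : ∀ (n : ℤ) (a : A), a ∈ 𝒜 → a ∈ specSub S n → ∀ b : A, b ∈ 𝒜 → ∀ w : H,
      δ a (φ b w) = δ (a * b) w - ((μ : ℂ) ^ n) • (φ a (δ b w)) := by
    intro n a ha has b hb w
    have h := hLeibniz n a ⟨ha, has⟩ b hb
    have h2 := congrArg (fun T : H →L[ℂ] H => T w) h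
    simp only [ContinuousLinearMap.add_apply, ContinuousLinearMap.smul_apply,
      ContinuousLinearMap.mul_apply] at h2
    exact eq_sub_of_add_eq h2.symm
  -- Key identity from the right frame: lowers the degree of the argument of δ
  have hKeyR : ∀ z : A, z ∈ 𝒜 →
      δ z = (μ : ℂ) • ∑ j, φ (ζR j) * δ (star (ζR j) * z) := by
    intro z hz
    have h1 : ∀ j, φ (star (ζR j)) * δ z
        = (μ : ℂ) • δ (star (ζR j) * z) - (μ : ℂ) • (δ (star (ζR j)) * φ z) := by
      intro j
      have h := hLeibniz (-1) (star (ζR j))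
        ⟨star_mem (hζRa j), S.specSub_star (hζRs j)⟩ z hz
      have h2 : (μ : ℂ) • δ (star (ζR j) * z)
          = (μ : ℂ) • (δ (star (ζR j)) * φ z) + φ (star (ζR j)) * δ z := by
        rw [h, smul_add, smul_smul, zpow_neg_one, mul_inv_cancel₀ hμc, one_smul]
      rw [h2]; abel
    have hsum : (∑ j, φ (ζR j) * φ (star (ζR j))) = 1 := by
      have : ∑ j, φ (ζR j) * φ (star (ζR j)) = φ (∑ j, ζR j * star (ζR j)) := by
        rw [map_sum]
        exact Finset.sum_congr rfl fun j _ => (map_mul φ _ _).symm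
      rw [this, hR1, map_one]
    calc δ z = (∑ j, φ (ζR j) * φ (star (ζR j))) * δ z := by rw [hsum, one_mul]
      _ = ∑ j, φ (ζR j) * (φ (star (ζR j)) * δ z) := by
          rw [Finset.sum_mul]
          exact Finset.sum_congr rfl fun j _ => mul_assoc _ _ _
      _ = ∑ j, ((μ : ℂ) • (φ (ζR j) * δ (star (ζR j) * z))
            - (μ : ℂ) • (φ (ζR j) * δ (star (ζR j)) * φ z)) := by
          refine Finset.sum_congr rfl fun j _ => ?_
          rw [h1 j, mul_sub, mul_smul_comm, mul_smul_comm, mul_assoc]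
      _ = (μ : ℂ) • (∑ j, φ (ζR j) * δ (star (ζR j) * z))
            - (μ : ℂ) • ((∑ j, φ (ζR j) * δ (star (ζR j))) * φ z) := by
          rw [Finset.sum_sub_distrib, ← Finset.smul_sum, ← Finset.smul_sum, Finset.sum_mul]
      _ = (μ : ℂ) • ∑ j, φ (ζR j) * δ (star (ζR j) * z) := by
          rw [hR2, zero_mul, smul_zero, sub_zero]
  -- Key identity from the left frame: raises the degree of the argument of δ
  have hL2' : ∑ j, φ (star (ζL j)) * δ (ζL j) = 0 := by
    rw [← hL2]
    exact Finset.sum_congr rfl fun j _ => by rw [map_star]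
  have hKeyL : ∀ z : A, z ∈ 𝒜 →
      δ z = (μ : ℂ)⁻¹ • ∑ j, φ (star (ζL j)) * δ (ζL j * z) := by
    intro z hz
    have h1 : ∀ j, φ (ζL j) * δ z
        = (μ : ℂ)⁻¹ • δ (ζL j * z) - (μ : ℂ)⁻¹ • (δ (ζL j) * φ z) := by
      intro j
      have h := hLeibniz 1 (ζL j) ⟨hζLa j, hζLs j⟩ z hz
      have h2 : (μ : ℂ)⁻¹ • δ (ζL j * z)
          = (μ : ℂ)⁻¹ • (δ (ζL j) * φ z) + φ (ζL j) * δ z := by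
        rw [h, smul_add, smul_smul, zpow_one, inv_mul_cancel₀ hμc, one_smul]
      rw [h2]; abel
    have hsum : (∑ j, φ (star (ζL j)) * φ (ζL j)) = 1 := by
      have : ∑ j, φ (star (ζL j)) * φ (ζL j) = φ (∑ j, star (ζL j) * ζL j) := by
        rw [map_sum]
        exact Finset.sum_congr rfl fun j _ => (map_mul φ _ _).symm
      rw [this, hL1, map_one]
    calc δ z = (∑ j, φ (star (ζL j)) * φ (ζL j)) * δ z := by rw [hsum, one_mul]
      _ = ∑ j, φ (star (ζL j)) * (φ (ζL j) * δ z) := by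
          rw [Finset.sum_mul]
          exact Finset.sum_congr rfl fun j _ => mul_assoc _ _ _
      _ = ∑ j, ((μ : ℂ)⁻¹ • (φ (star (ζL j)) * δ (ζL j * z))
            - (μ : ℂ)⁻¹ • (φ (star (ζL j)) * δ (ζL j) * φ z)) := by
          refine Finset.sum_congr rfl fun j _ => ?_
          rw [h1 j, mul_sub, mul_smul_comm, mul_smul_comm, mul_assoc]
      _ = (μ : ℂ)⁻¹ • (∑ j, φ (star (ζL j)) * δ (ζL j * z))
            - (μ : ℂ)⁻¹ • ((∑ j, φ (star (ζL j)) * δ (ζL j)) * φ z) := by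
          rw [Finset.sum_sub_distrib, ← Finset.smul_sum, ← Finset.smul_sum, Finset.sum_mul]
      _ = (μ : ℂ)⁻¹ • ∑ j, φ (star (ζL j)) * δ (ζL j * z) := by
          rw [hL2', zero_mul, smul_zero, sub_zero]
  -- Reduction: if δ of every degree-zero element maps v into HM m₀, then δ of any
  -- degree-k element maps v into HM (m₀ + k)
  have hRed : ∀ (v : H) (m₀ : ℤ),
      (∀ d : A, d ∈ 𝒜 → d ∈ specSub S 0 → δ d v ∈ HM m₀) →
      ∀ (k : ℤ) (z : A), z ∈ 𝒜 → z ∈ specSub S k → δ z v ∈ HM (m₀ + k) := by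
    intro v m₀ h0 k
    induction k using Int.induction_on with
    | zero =>
      intro z hz hzs
      rw [show m₀ + 0 = m₀ by ring]
      exact h0 z hz hzs
    | succ i ih =>
      intro z hz hzs
      rw [hKeyR z hz]
      have happ : ((μ : ℂ) • ∑ j, φ (ζR j) * δ (star (ζR j) * z)) v
          = (μ : ℂ) • ∑ j, φ (ζR j) ((δ (star (ζR j) * z)) v) := by
        simp [ContinuousLinearMap.smul_apply, ContinuousLinearMap.sum_apply,
          ContinuousLinearMap.mul_apply]
      rw [happ]
      refine Submodule.smul_mem _ _ (Submodule.sum_mem _ fun j _ => ?_)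
      have hmem : star (ζR j) * z ∈ specSub S i := by
        have h := S.specSub_mul (S.specSub_star (hζRs j)) hzs
        rwa [show (-1 : ℤ) + ((i : ℤ) + 1) = i by ring] at h
      have hδm := ih (star (ζR j) * z) (mul_mem (star_mem (hζRa j)) hz) hmem
      have h2 := hφmap 1 (m₀ + i) (ζR j) (hζRs j) _ hδm
      rwa [show (1 : ℤ) + (m₀ + i) = m₀ + ((i : ℤ) + 1) by ring] at h2
    | pred i ih =>
      intro z hz hzs
      rw [hKeyL z hz]
      have happ : ((μ : ℂ)⁻¹ • ∑ j, φ (star (ζL j)) * δ (ζL j * z)) v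
          = (μ : ℂ)⁻¹ • ∑ j, φ (star (ζL j)) ((δ (ζL j * z)) v) := by
        simp [ContinuousLinearMap.smul_apply, ContinuousLinearMap.sum_apply,
          ContinuousLinearMap.mul_apply]
      rw [happ]
      refine Submodule.smul_mem _ _ (Submodule.sum_mem _ fun j _ => ?_)
      have hmem : ζL j * z ∈ specSub S (-(i : ℤ)) := by
        have h := S.specSub_mul (hζLs j) hzs
        rwa [show (1 : ℤ) + (-(i : ℤ) - 1) = -(i : ℤ) by ring] at h
      have hδm := ih (ζL j * z) (mul_mem (hζLa j) hz) hmem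
      have h2 := hφmap (-1) (m₀ + -(i : ℤ)) (star (ζL j)) (S.specSub_star (hζLs j)) _ hδm
      rwa [show (-1 : ℤ) + (m₀ + -(i : ℤ)) = m₀ + (-(i : ℤ) - 1) by ring] at h2
  -- every element of 𝒜 is a finite sum of homogeneous elements of 𝒜
  have hhom : ∀ a ∈ 𝒜, a ∈ Submodule.span ℂ (⋃ d : ℤ, ((𝒜 : Set A) ∩ specSub S d)) := by
    intro a ha
    have ha' : a ∈ StarAlgebra.adjoin ℂ ((𝒜 : Set A) ∩ specSub S 1) := by
      rw [hgen] at ha; exact ha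
    refine StarAlgebra.adjoin_induction (fun x hx => ?_) (fun r => ?_)
      (fun x y _ _ hx hy => Submodule.add_mem _ hx hy) (fun x y _ _ hx hy => ?_)
      (fun x hxa hx => ?_) ha'
    · exact Submodule.subset_span (Set.mem_iUnion.mpr ⟨1, hx⟩)
    · rw [Algebra.algebraMap_eq_smul_one]
      exact Submodule.smul_mem _ _ (Submodule.subset_span
        (Set.mem_iUnion.mpr ⟨0, one_mem 𝒜, S.specSub_one_mem⟩))
    · have hmul := Submodule.mul_mem_mul hx hy
      rw [Submodule.span_mul_span] at hmul
      refine Submodule.span_le.mpr ?_ hmul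
      rintro w ⟨u, hu, v, hv, rfl⟩
      obtain ⟨du, hu1, hu2⟩ := Set.mem_iUnion.mp hu
      obtain ⟨dv, hv1, hv2⟩ := Set.mem_iUnion.mp hv
      exact Submodule.subset_span (Set.mem_iUnion.mpr
        ⟨du + dv, mul_mem hu1 hv1, S.specSub_mul hu2 hv2⟩)
    · clear hxa
      induction hx using Submodule.span_induction with
      | mem w hw =>
        obtain ⟨d, h1, h2⟩ := Set.mem_iUnion.mp hw
        exact Submodule.subset_span (Set.mem_iUnion.mpr ⟨-d, star_mem h1, S.specSub_star h2⟩)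
      | zero => rw [star_zero]; exact Submodule.zero_mem _
      | add u v hu hv hu2 hv2 => rw [star_add]; exact Submodule.add_mem _ hu2 hv2
      | smul c u hu hu2 => rw [star_smul]; exact Submodule.smul_mem _ _ hu2
  -- 𝒜 ∩ A₀ is dense in A₀
  have hdens0 : ∀ c : A, c ∈ specSub S 0 → c ∈ closure ((𝒜 : Set A) ∩ specSub S 0) := by
    intro c hc
    rw [Metric.mem_closure_iff]
    intro ε hε
    obtain ⟨a, ha, hdist⟩ := Metric.mem_closure_iff.mp (hdense c) ε hε
    obtain ⟨nn, f, g, hfg⟩ := Submodule.mem_span_set'.mp (hhom a ha)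
    choose dd hgm using fun i : Fin nn => Set.mem_iUnion.mp (g i).2
    obtain ⟨N, hNgt, hNpos⟩ : ∃ N : ℕ, (∀ i, (dd i).natAbs < N) ∧ 0 < N :=
      ⟨(Finset.univ.sup fun i : Fin nn => (dd i).natAbs) + 1,
        fun i => Nat.lt_succ_of_le (Finset.le_sup (f := fun i : Fin nn => (dd i).natAbs) (Finset.mem_univ i)), Nat.succ_pos _⟩
    have hNR : (N : ℝ) ≠ 0 := Nat.cast_ne_zero.mpr hNpos.ne'
    have hNC : (N : ℂ) ≠ 0 := Nat.cast_ne_zero.mpr hNpos.ne'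
    set ω : Circle := Circle.exp (2 * π / N) with hωdef
    have hswap : ∀ (x : ℂ) (t : ℕ) (d : ℤ), ((x ^ t : ℂ)) ^ d = (x ^ d) ^ t := by
      intro x t d
      rw [← zpow_natCast x t, ← zpow_mul, mul_comm, zpow_mul, zpow_natCast]
    have homegaN : ((ω : ℂ)) ^ (N : ℕ) = 1 := by
      rw [hωdef, Circle.coe_exp, ← Complex.exp_nat_mul]
      rw [show ((N : ℂ) * (((2 * π / N : ℝ) : ℂ) * Complex.I)) = 2 * (π : ℂ) * Complex.I by
        push_cast
        field_simp]
      exact Complex.exp_two_pi_mul_I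
    have havg : ∀ (d : ℤ) (y : A), y ∈ specSub S d →
        ∑ t ∈ Finset.range N, S.σ (ω ^ t) y
          = (∑ t ∈ Finset.range N, ((ω : ℂ) ^ d) ^ t) • y := by
      intro d y hy
      rw [Finset.sum_smul]
      refine Finset.sum_congr rfl fun t _ => ?_
      rw [hy (ω ^ t)]
      congr 1
      rw [show ((ω ^ t : Circle) : ℂ) = ((ω : ℂ)) ^ t by norm_cast, hswap]
    have havg0 : ∀ y : A, y ∈ specSub S 0 →
        ∑ t ∈ Finset.range N, S.σ (ω ^ t) y = (N : ℂ) • y := by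
      intro y hy
      have hone : ∑ t ∈ Finset.range N, ((ω : ℂ) ^ (0 : ℤ)) ^ t = (N : ℂ) := by
        rw [zpow_zero]
        simp
      rw [havg 0 y hy, hone]
    have havgne : ∀ (d : ℤ), d ≠ 0 → d.natAbs < N → ∀ y : A, y ∈ specSub S d →
        ∑ t ∈ Finset.range N, S.σ (ω ^ t) y = 0 := by
      intro d hd hdN y hy
      have hq1 : ((ω : ℂ)) ^ d ≠ 1 := by
        intro hq
        rw [hωdef, Circle.coe_exp, ← Complex.exp_int_mul, Complex.exp_eq_one_iff] at hq
        obtain ⟨k, hk⟩ := hq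
        have h2 : (d : ℂ) * ((2 * π / N : ℝ) : ℂ) = (k : ℂ) * (2 * (π : ℂ)) :=
          mul_right_cancel₀ Complex.I_ne_zero (by push_cast at hk ⊢; linear_combination hk)
        have h3 : (d : ℝ) * (2 * π / N) = (k : ℝ) * (2 * π) := by exact_mod_cast h2
        have h4 : (d : ℝ) = (k : ℝ) * N := by
          field_simp at h3
          nlinarith [Real.pi_pos, h3]
        have h5 : d = k * N := by exact_mod_cast h4
        have hk0 : k ≠ 0 := by rintro rfl; simp at h5; exact hd h5
        have h6 : N ≤ d.natAbs := by
          rw [h5, Int.natAbs_mul]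
          simpa using Nat.le_mul_of_pos_left N (Int.natAbs_pos.mpr hk0)
        omega
      have hsum0 : ∑ t ∈ Finset.range N, ((ω : ℂ) ^ d) ^ t = 0 := by
        rw [geom_sum_eq hq1 N, ← hswap, homegaN, one_zpow, sub_self, zero_div]
      rw [havg d y hy, hsum0, zero_smul]
    set b : A := (N : ℂ)⁻¹ • ∑ t ∈ Finset.range N, S.σ (ω ^ t) a with hbdef
    have hsa : ∀ t : ℕ, S.σ (ω ^ t) a = ∑ i, f i • S.σ (ω ^ t) ((g i : A)) := by
      intro t
      conv_lhs => rw [← hfg]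
      rw [S.sigma_sum]
      exact Finset.sum_congr rfl fun i _ => S.map_smul _ _ _
    have hkey : ∑ t ∈ Finset.range N, S.σ (ω ^ t) a
        = ∑ i, f i • (∑ t ∈ Finset.range N, S.σ (ω ^ t) ((g i : A))) := by
      calc ∑ t ∈ Finset.range N, S.σ (ω ^ t) a
          = ∑ t ∈ Finset.range N, ∑ i, f i • S.σ (ω ^ t) ((g i : A)) :=
            Finset.sum_congr rfl fun t _ => hsa t
        _ = ∑ i, ∑ t ∈ Finset.range N, f i • S.σ (ω ^ t) ((g i : A)) := Finset.sum_comm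
        _ = ∑ i, f i • ∑ t ∈ Finset.range N, S.σ (ω ^ t) ((g i : A)) :=
            Finset.sum_congr rfl fun i _ => (Finset.smul_sum).symm
    have hXmem : ∀ i : Fin nn,
        (∑ t ∈ Finset.range N, S.σ (ω ^ t) ((g i : A))) ∈ 𝒜 ∧
        (∑ t ∈ Finset.range N, S.σ (ω ^ t) ((g i : A))) ∈ specSub S 0 := by
      intro i
      by_cases hdi : dd i = 0
      · have hg0 : (g i : A) ∈ specSub S 0 := by rw [← hdi]; exact (hgm i).2
        rw [havg0 _ hg0]
        exact ⟨SMulMemClass.smul_mem _ (hgm i).1, S.specSub_smul _ hg0⟩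
      · rw [havgne (dd i) hdi (hNgt i) _ (hgm i).2]
        exact ⟨zero_mem 𝒜, S.specSub_zero_mem 0⟩
    have hb𝒜 : b ∈ 𝒜 := by
      rw [hbdef, hkey]
      exact SMulMemClass.smul_mem _ (sum_mem fun i _ => SMulMemClass.smul_mem _ (hXmem i).1)
    have hbs : b ∈ specSub S 0 := by
      rw [hbdef, hkey]
      rw [← S.mem_specSubmodule]
      exact Submodule.smul_mem _ _ (Submodule.sum_mem _ fun i _ =>
        Submodule.smul_mem _ _ ((S.mem_specSubmodule).mpr (hXmem i).2))
    refine ⟨b, ⟨hb𝒜, hbs⟩, ?_⟩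
    have hc' : c = (N : ℂ)⁻¹ • ∑ t ∈ Finset.range N, S.σ (ω ^ t) c := by
      rw [havg0 c hc, smul_smul, inv_mul_cancel₀ hNC, one_smul]
    have hcb : c - b = (N : ℂ)⁻¹ • ∑ t ∈ Finset.range N, S.σ (ω ^ t) (c - a) := by
      conv_lhs => rw [hc', hbdef]
      rw [← smul_sub, ← Finset.sum_sub_distrib]
      congr 1
      exact Finset.sum_congr rfl fun t _ => (S.sigma_sub _ _ _).symm
    have h2 : ‖∑ t ∈ Finset.range N, S.σ (ω ^ t) (c - a)‖ ≤ N * ‖c - a‖ := by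
      calc ‖∑ t ∈ Finset.range N, S.σ (ω ^ t) (c - a)‖
          ≤ ∑ t ∈ Finset.range N, ‖S.σ (ω ^ t) (c - a)‖ := norm_sum_le _ _
        _ = ∑ t ∈ Finset.range N, ‖c - a‖ :=
            Finset.sum_congr rfl fun t _ => S.norm_sigma _ _
        _ = N * ‖c - a‖ := by rw [Finset.sum_const, Finset.card_range, nsmul_eq_mul]
    have h1 : ‖(N : ℂ)⁻¹‖ = (N : ℝ)⁻¹ := by
      rw [norm_inv]; norm_num
    rw [dist_eq_norm, hcb, norm_smul]
    calc ‖(N : ℂ)⁻¹‖ * ‖∑ t ∈ Finset.range N, S.σ (ω ^ t) (c - a)‖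
        ≤ (N : ℝ)⁻¹ * (N * ‖c - a‖) := by
          rw [h1]
          exact mul_le_mul_of_nonneg_left h2 (by positivity)
      _ = ‖c - a‖ := by field_simp
      _ = dist c a := (dist_eq_norm c a).symm
      _ < ε := hdist
  -- φ is continuous
  have hφcont : Continuous fun x : A => φ x := by
    refine AddMonoidHomClass.continuous_of_bound φ 1 fun x => ?_
    rw [one_mul]
    exact NonUnitalStarAlgHom.norm_apply_le φ x
  -- the crux: δ of a degree-zero element of 𝒜 maps generators of H₀-type into HM 0
  have hcrux : ∀ d : A, d ∈ 𝒜 → d ∈ specSub S 0 → ∀ c : A, c ∈ specSub S 0 → ∀ ξ : H₀,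
      δ d (φ c (ξ : H)) ∈ HM 0 := by
    intro d hd hd0 c hc ξ
    obtain ⟨u, hu, hulim⟩ := mem_closure_iff_seq_limit.mp (hdens0 c hc)
    have hterm : ∀ i : ℕ, δ d (φ (u i) (ξ : H)) ∈ HM 0 := by
      intro i
      obtain ⟨hu𝒜, hus⟩ := hu i
      rw [hLB 0 d hd hd0 (u i) hu𝒜 (ξ : H)]
      have hdu : d * u i ∈ specSub S 0 := by
        have h := S.specSub_mul hd0 hus
        rwa [show (0 : ℤ) + 0 = 0 by ring] at h
      have h1 : δ (d * u i) (ξ : H) ∈ HM 0 := by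
        rw [hδδ₀ (d * u i) ⟨mul_mem hd hu𝒜, hdu⟩ ξ]
        exact hH₀sub _
      have h2 : φ d (δ (u i) (ξ : H)) ∈ HM 0 := by
        have h3 : δ (u i) (ξ : H) ∈ HM 0 := by
          rw [hδδ₀ (u i) ⟨hu𝒜, hus⟩ ξ]
          exact hH₀sub _
        have h4 := hφmap 0 0 d hd0 _ h3
        rwa [show (0 : ℤ) + 0 = 0 by ring] at h4
      exact Submodule.sub_mem _ h1 (Submodule.smul_mem _ _ h2)
    have hφu : Filter.Tendsto (fun i => φ (u i) (ξ : H)) Filter.atTop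
        (nhds (φ c (ξ : H))) := by
      have h1 : Filter.Tendsto (fun i => φ (u i)) Filter.atTop (nhds (φ c)) :=
        (hφcont.tendsto c).comp hulim
      exact ((ContinuousLinearMap.apply ℂ H (ξ : H)).continuous.tendsto _).comp h1
    have hlim : Filter.Tendsto (fun i => δ d (φ (u i) (ξ : H))) Filter.atTop
        (nhds (δ d (φ c (ξ : H)))) := ((δ d).continuous.tendsto _).comp hφu
    exact (hHMclosed 0).mem_of_tendsto hlim (Filter.Eventually.of_forall hterm)
  -- main statement by induction on the degree m of the vector
  have hRR : ∀ (m n : ℤ) (a : A), a ∈ 𝒜 → a ∈ specSub S n →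
      ∀ x : A, x ∈ specSub S m → ∀ ξ : H₀, δ a (φ x (ξ : H)) ∈ HM (n + m) := by
    intro m
    induction m using Int.induction_on with
    | zero =>
      intro n a ha has x hx ξ
      have h0 : ∀ d : A, d ∈ 𝒜 → d ∈ specSub S 0 → δ d (φ x (ξ : H)) ∈ HM 0 :=
        fun d hd hd0 => hcrux d hd hd0 x hx ξ
      have h := hRed (φ x (ξ : H)) 0 h0 n a ha has
      rwa [show (0 : ℤ) + n = n + 0 by ring] at h
    | succ i ih =>
      intro n a ha has x hx ξ
      have h1 : x = ∑ j, ζR j * (star (ζR j) * x) := by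
        calc x = (∑ j, ζR j * star (ζR j)) * x := by rw [hR1, one_mul]
          _ = ∑ j, ζR j * (star (ζR j) * x) := by
              rw [Finset.sum_mul]
              exact Finset.sum_congr rfl fun j _ => mul_assoc _ _ _
      have h2 : φ x (ξ : H) = ∑ j, φ (ζR j) (φ (star (ζR j) * x) (ξ : H)) := by
        conv_lhs => rw [h1]
        rw [map_sum, ContinuousLinearMap.sum_apply]
        refine Finset.sum_congr rfl fun j _ => ?_
        rw [map_mul, ContinuousLinearMap.mul_apply]
      rw [h2, map_sum]
      refine Submodule.sum_mem _ fun j _ => ?_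
      have hxj : star (ζR j) * x ∈ specSub S (i : ℤ) := by
        have h := S.specSub_mul (S.specSub_star (hζRs j)) hx
        rwa [show (-1 : ℤ) + ((i : ℤ) + 1) = (i : ℤ) by ring] at h
      rw [hLB n a ha has (ζR j) (hζRa j) _]
      refine Submodule.sub_mem _ ?_ (Submodule.smul_mem _ _ ?_)
      · have h := ih (n + 1) (a * ζR j) (mul_mem ha (hζRa j))
          (S.specSub_mul has (hζRs j)) _ hxj ξ
        rwa [show (n + 1) + (i : ℤ) = n + ((i : ℤ) + 1) by ring] at h
      · have h3 := ih 1 (ζR j) (hζRa j) (hζRs j) _ hxj ξ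
        have h4 := hφmap n (1 + (i : ℤ)) a has _ h3
        rwa [show n + (1 + (i : ℤ)) = n + ((i : ℤ) + 1) by ring] at h4
    | pred i ih =>
      intro n a ha has x hx ξ
      have h1 : x = ∑ j, star (ζL j) * (ζL j * x) := by
        calc x = (∑ j, star (ζL j) * ζL j) * x := by rw [hL1, one_mul]
          _ = ∑ j, star (ζL j) * (ζL j * x) := by
              rw [Finset.sum_mul]
              exact Finset.sum_congr rfl fun j _ => mul_assoc _ _ _
      have h2 : φ x (ξ : H) = ∑ j, φ (star (ζL j)) (φ (ζL j * x) (ξ : H)) := by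
        conv_lhs => rw [h1]
        rw [map_sum, ContinuousLinearMap.sum_apply]
        refine Finset.sum_congr rfl fun j _ => ?_
        rw [map_mul, ContinuousLinearMap.mul_apply]
      rw [h2, map_sum]
      refine Submodule.sum_mem _ fun j _ => ?_
      have hxj : ζL j * x ∈ specSub S (-(i : ℤ)) := by
        have h := S.specSub_mul (hζLs j) hx
        rwa [show (1 : ℤ) + (-(i : ℤ) - 1) = -(i : ℤ) by ring] at h
      rw [hLB n a ha has (star (ζL j)) (star_mem (hζLa j)) _]
      refine Submodule.sub_mem _ ?_ (Submodule.smul_mem _ _ ?_)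
      · have h := ih (n + -1) (a * star (ζL j)) (mul_mem ha (star_mem (hζLa j)))
          (S.specSub_mul has (S.specSub_star (hζLs j))) _ hxj ξ
        rwa [show (n + -1) + -(i : ℤ) = n + (-(i : ℤ) - 1) by ring] at h
      · have h3 := ih (-1) (star (ζL j)) (star_mem (hζLa j)) (S.specSub_star (hζLs j)) _ hxj ξ
        have h4 := hφmap n (-1 + -(i : ℤ)) a has _ h3
        rwa [show n + (-1 + -(i : ℤ)) = n + (-(i : ℤ) - 1) by ring] at h4
  -- conclude
  intro n m a ha
  obtain ⟨ha𝒜, haspec⟩ := ha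
  constructor
  · intro v hv
    have hle : Submodule.span ℂ {w : H | ∃ x ∈ specSub S m, ∃ ξ ∈ H₀, w = φ x ξ}
        ≤ (HM (n + m)).comap ((δ a : H →L[ℂ] H) : H →ₗ[ℂ] H) := by
      rw [Submodule.span_le]
      rintro w ⟨x, hx, ξ, hξ, rfl⟩
      simp only [SetLike.mem_coe, Submodule.mem_comap, ContinuousLinearMap.coe_coe]
      exact hRR m n a ha𝒜 haspec x hx ⟨ξ, hξ⟩
    have hmaps : Set.MapsTo (δ a)
        (↑(Submodule.span ℂ {w : H | ∃ x ∈ specSub S m, ∃ ξ ∈ H₀, w = φ x ξ}) : Set H)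
        (HM (n + m) : Set H) := fun w hw => Submodule.mem_comap.mp (hle hw)
    have h := map_mem_closure (δ a).continuous hv hmaps
    rw [(hHMclosed (n + m)).closure_eq] at h
    rw [← Submodule.topologicalClosure_coe]
    exact h
  · intro x hx ξ hξ
    have h := hRR m n a ha𝒜 haspec x hx.2 ⟨ξ, hξ⟩
    rw [← Submodule.topologicalClosure_coe]
    exact h


end
end
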